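/- There is a perfect set P ⊆ ℝ² contained in the graph of a convex C¹ function ψ : ℝ → ℝ such that P meets every C² arc in a finite set, where a C² arc is the image of an injective C² map g from a compact interval into ℝ² with g'(t) ≠ 0 for all t. -/

import Mathlib

/-!
Let `f` be the primitive of `x ↦ infDist x C` for the middle-thirds Cantor set `C`. It is an
increasing homeomorphism of `ℝ` (`C` has empty interior) which is quadratically flat on `C`:
`|f d - f c| ≤ (d - c)²` for `c ∈ C`. Its inverse `φ` is increasing, so its primitive `ψ` is
convex and `C¹`; `P` is the graph of `ψ` over the Cantor set `K = f(C)`.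

If a regular `C²` arc `g` met `P` infinitely often, the parameters of the meeting points would
accumulate at some `t₀`, and by Rolle so would the zeros of `(g₂ - ψ ∘ g₁)' = g₂' - (φ ∘ g₁) g₁'`.
There `g₁' ≠ 0` because `g' ≠ 0`, so on these zeros `φ ∘ g₁` agrees with `g₂' / g₁'`, which is
differentiable at `t₀`; hence `φ ∘ g₁` moves at most linearly in `t - t₀`, and the flatness of
`f = φ⁻¹` at `φ (g₁ t₀) ∈ C` lets `g₁` move only quadratically, contradicting `g₁' t₀ ≠ 0`.
-/

open Set Filter Topology Metric Asymptotics intervalIntegral Function MeasureTheory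

theorem HasDerivWithinAt.fst {f : ℝ → ℝ × ℝ} {f' : ℝ × ℝ} {s : Set ℝ} {x : ℝ}
    (h : HasDerivWithinAt f f' s x) : HasDerivWithinAt (fun t => (f t).1) f'.1 s x :=
  (hasFDerivAt_fst (𝕜 := ℝ) (p := f x)).comp_hasDerivWithinAt x h

theorem HasDerivWithinAt.snd {f : ℝ → ℝ × ℝ} {f' : ℝ × ℝ} {s : Set ℝ} {x : ℝ}
    (h : HasDerivWithinAt f f' s x) : HasDerivWithinAt (fun t => (f t).2) f'.2 s x :=
  (hasFDerivAt_snd (𝕜 := ℝ) (p := f x)).comp_hasDerivWithinAt x h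

instance Pi.perfectSpace {ι : Type*} [Infinite ι] {X : ι → Type*} [∀ i, TopologicalSpace (X i)]
    [∀ i, Nontrivial (X i)] : PerfectSpace (∀ i, X i) := by
  classical
  refine perfectSpace_iff_forall_not_isolated.2 fun x => ?_
  choose y hy using fun i => exists_ne (x i)
  have hupdate : Tendsto (fun i => update x i (y i)) cofinite (𝓝[≠] x) := by
    refine tendsto_nhdsWithin_iff.2 ⟨tendsto_pi_nhds.2 fun j => ?_, .of_forall fun i h => ?_⟩
    · exact tendsto_const_nhds.congr' <| (eventually_cofinite_ne j).mono fun i hij =>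
        (update_of_ne hij.symm _ _).symm
    · exact hy i (by simpa using congrFun h i)
  exact hupdate.neBot

theorem Preperfect.image {X Y : Type*} [TopologicalSpace X] [TopologicalSpace Y] {s : Set X}
    {f : X → Y} (hs : Preperfect s) (hf : Continuous f) (hinj : Injective f) :
    Preperfect (f '' s) := by
  rintro _ ⟨x, hx, rfl⟩
  simpa using (hs x hx).map hf.continuousAt hinj

theorem IsTotallyDisconnected.interior_eq_empty {s : Set ℝ} (hs : IsTotallyDisconnected s) :
    interior s = ∅ := by
  refine eq_empty_of_forall_notMem fun x hx => ?_
  obtain ⟨ε, hε, hball⟩ := Metric.isOpen_iff.1 isOpen_interior x hx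
  have := hs _ (hball.trans interior_subset) (convex_ball x ε).isPreconnected
    (mem_ball_self hε) (show x + ε / 2 ∈ ball x ε by simp [abs_of_pos hε]; linarith)
  linarith

theorem range_coe_comp_cantorSetHomeomorphNatToBool_symm :
    range ((↑) ∘ cantorSetHomeomorphNatToBool.symm) = cantorSet := by
  rw [cantorSetHomeomorphNatToBool.symm.surjective.range_comp, Subtype.range_coe]

theorem preperfect_cantorSet : Preperfect cantorSet := by
  rw [← range_coe_comp_cantorSetHomeomorphNatToBool_symm, ← image_univ]
  exact PerfectSpace.univ_preperfect.image
    (continuous_subtype_val.comp cantorSetHomeomorphNatToBool.symm.continuous)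
    (Subtype.val_injective.comp cantorSetHomeomorphNatToBool.symm.injective)

theorem interior_cantorSet : interior cantorSet = ∅ := by
  refine IsTotallyDisconnected.interior_eq_empty ?_
  rw [← range_coe_comp_cantorSetHomeomorphNatToBool_symm]
  exact (IsEmbedding.subtypeVal.comp
    cantorSetHomeomorphNatToBool.symm.isEmbedding).isTotallyDisconnected_range.2 inferInstance

theorem surjective_primitive_of_one_le {m : ℝ → ℝ} (hm : Continuous m) {R : ℝ}
    (h : ∀ s, R ≤ |s| → 1 ≤ m s) : Surjective fun t => ∫ s in (0 : ℝ)..t, m s := by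
  have hint : ∀ x y, IntervalIntegrable m volume x y := hm.intervalIntegrable
  have hsub : ∀ x y, (∫ s in (0 : ℝ)..y, m s) - ∫ s in (0 : ℝ)..x, m s = ∫ s in x..y, m s :=
    fun x y => integral_interval_sub_left (hint 0 y) (hint 0 x)
  have hlow : ∀ x y, x ≤ y → (∀ s ∈ Icc x y, R ≤ |s|) → y - x ≤ ∫ s in x..y, m s :=
    fun x y hxy hR => by
      simpa using integral_mono_on hxy intervalIntegrable_const (hint x y)
        fun s hs => h s (hR s hs)
  refine (continuous_primitive hint 0).surjective ?_ ?_
  · refine tendsto_atTop_mono' _ ?_ (tendsto_atTop_add_const_right _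
      ((∫ s in (0 : ℝ)..|R|, m s) - |R|) tendsto_id)
    filter_upwards [eventually_ge_atTop |R|] with t ht
    have := hlow |R| t ht fun s hs => by linarith [hs.1, le_abs_self R, le_abs_self s]
    linarith [hsub |R| t, id_eq t]
  · refine tendsto_atBot_mono' _ ?_ (tendsto_atBot_add_const_right _
      ((∫ s in (0 : ℝ)..-|R|, m s) + |R|) tendsto_id)
    filter_upwards [eventually_le_atBot (-|R|)] with t ht
    have := hlow t (-|R|) ht fun s hs => by linarith [hs.2, le_abs_self R, neg_le_abs s]
    linarith [hsub t (-|R|), id_eq t]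

noncomputable def infDistPrimitive (K : Set ℝ) (t : ℝ) : ℝ := ∫ s in (0 : ℝ)..t, infDist s K

section infDistPrimitive

variable {K : Set ℝ}

theorem hasDerivAt_infDistPrimitive (K : Set ℝ) (t : ℝ) :
    HasDerivAt (infDistPrimitive K) (infDist t K) t :=
  ((continuous_infDist_pt K).integral_hasStrictDerivAt 0 t).hasDerivAt

theorem continuous_infDistPrimitive (K : Set ℝ) : Continuous (infDistPrimitive K) :=
  continuous_iff_continuousAt.2 fun t => (hasDerivAt_infDistPrimitive K t).continuousAt

theorem infDistPrimitive_sub (K : Set ℝ) (c d : ℝ) :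
    infDistPrimitive K d - infDistPrimitive K c = ∫ s in c..d, infDist s K :=
  integral_interval_sub_left ((continuous_infDist_pt K).intervalIntegrable _ _)
    ((continuous_infDist_pt K).intervalIntegrable _ _)

theorem abs_infDistPrimitive_sub_le_sq {c : ℝ} (hc : c ∈ K) (d : ℝ) :
    |infDistPrimitive K d - infDistPrimitive K c| ≤ (d - c) ^ 2 := by
  rw [infDistPrimitive_sub, ← Real.norm_eq_abs, ← sq_abs]
  refine (intervalIntegral.norm_integral_le_of_norm_le_const fun s hs => ?_).trans_eq (sq _).symm
  rw [Real.norm_of_nonneg infDist_nonneg]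
  exact (infDist_le_dist_of_mem hc).trans (abs_sub_left_of_mem_uIcc (uIoc_subset_uIcc hs))

theorem strictMono_infDistPrimitive (hK : IsClosed K) (hne : K.Nonempty)
    (hint : interior K = ∅) : StrictMono (infDistPrimitive K) := by
  intro u v huv
  rw [← sub_pos, infDistPrimitive_sub, integral_pos_iff_support_of_nonneg_ae'
    (.of_forall fun _ => infDist_nonneg) ((continuous_infDist_pt K).intervalIntegrable _ _)]
  have hsupport : support (infDist · K) = Kᶜ := by
    ext s
    simp [hK.mem_iff_infDist_zero hne]
  have hgap : (Kᶜ ∩ Ioo u v).Nonempty := by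
    rw [inter_comm, ← sdiff_eq, sdiff_nonempty]
    intro hsub
    simpa [hint] using interior_maximal hsub isOpen_Ioo (nonempty_Ioo.2 huv).some_mem
  rw [hsupport]
  exact ⟨huv, (hK.isOpen_compl.inter isOpen_Ioo |>.measure_pos _ hgap).trans_le
    (measure_mono (inter_subset_inter_right _ Ioo_subset_Ioc_self))⟩

theorem surjective_infDistPrimitive (hK : Bornology.IsBounded K) (hne : K.Nonempty) :
    Surjective (infDistPrimitive K) := by
  obtain ⟨R, hR⟩ := hK.subset_closedBall 0
  refine surjective_primitive_of_one_le (continuous_infDist_pt K) (R := R + 1) fun s hs => ?_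
  refine (le_infDist hne).2 fun c hc => ?_
  have hc' : |c| ≤ R := mem_closedBall_zero_iff.1 (hR hc)
  rw [Real.dist_eq]
  linarith [abs_sub_abs_le_abs_sub s c]

end infDistPrimitive

theorem Set.OrdConnected.exists_mem_uIoo_hasDerivWithinAt_eq_zero {s : Set ℝ} (hs : s.OrdConnected)
    {H H' : ℝ → ℝ} (hH : ∀ t ∈ s, HasDerivWithinAt H (H' t) s t) {x y : ℝ} (hx : x ∈ s)
    (hy : y ∈ s) (hxy : x ≠ y) (hHxy : H x = H y) : ∃ ξ ∈ uIoo x y, H' ξ = 0 := by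
  wlog hlt : x < y generalizing x y
  · rw [uIoo_comm]
    exact this hy hx hxy.symm hHxy.symm (hxy.symm.lt_of_le (not_lt.1 hlt))
  rw [uIoo_of_lt hlt]
  have hIcc : Icc x y ⊆ s := hs.out hx hy
  refine exists_hasDerivAt_eq_zero hlt (fun t ht => (hH t (hIcc ht)).continuousWithinAt.mono hIcc)
    hHxy fun t ht => (hH t (hIcc (Ioo_subset_Icc_self ht))).hasDerivAt ?_
  exact mem_of_superset (isOpen_Ioo.mem_nhds ht) (Ioo_subset_Icc_self.trans hIcc)

theorem Set.OrdConnected.accPt_setOf_hasDerivWithinAt_eq_zero {s : Set ℝ} (hs : s.OrdConnected)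
    {H H' : ℝ → ℝ} (hH : ∀ t ∈ s, HasDerivWithinAt H (H' t) s t) {t₀ : ℝ} (ht₀ : t₀ ∈ s)
    (hH₀ : H t₀ = 0) (hacc : AccPt t₀ (𝓟 {t ∈ s | H t = 0})) :
    AccPt t₀ (𝓟 {t ∈ s | H' t = 0}) := by
  refine accPt_iff_nhds.2 fun U hU => ?_
  obtain ⟨ε, hε, hball⟩ := Metric.mem_nhds_iff.1 hU
  obtain ⟨y, ⟨hyball, hys, hHy⟩, hyt₀⟩ := accPt_iff_nhds.1 hacc _ (ball_mem_nhds t₀ hε)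
  obtain ⟨ξ, hξ, hH'ξ⟩ :=
    hs.exists_mem_uIoo_hasDerivWithinAt_eq_zero hH hys ht₀ hyt₀ (hHy.trans hH₀.symm)
  have hξ_uIcc : ξ ∈ uIcc y t₀ := uIoo_subset_uIcc_self hξ
  refine ⟨ξ, ⟨hball ((convex_ball t₀ ε).ordConnected.uIcc_subset hyball (mem_ball_self hε) hξ_uIcc),
    hs.uIcc_subset hys ht₀ hξ_uIcc, hH'ξ⟩, ?_⟩
  rintro rfl
  exact right_notMem_uIoo hξ

theorem not_accPt_setOf_eq_of_abs_sub_le_sq {s : Set ℝ} {u w q : ℝ → ℝ} {t₀ v : ℝ}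
    (hu : HasDerivWithinAt u v s t₀) (hv : v ≠ 0) (hq : DifferentiableWithinAt ℝ q s t₀)
    (huw : ∀ t, |u t - u t₀| ≤ (w t - w t₀) ^ 2) (hwq : w t₀ = q t₀) :
    ¬ AccPt t₀ (𝓟 {t ∈ s | w t = q t}) := by
  intro hacc
  set l := 𝓝[{t ∈ s | w t = q t} \ {t₀}] t₀
  have : l.NeBot := accPt_principal_iff_nhdsWithin.1 hacc
  have hl : l ≤ 𝓝[s] t₀ := nhdsWithin_mono _ fun t ht => ht.1.1
  have hw_eq : ∀ᶠ t in l, (w t - w t₀) ^ 2 = (q t - q t₀) ^ 2 :=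
    eventually_mem_nhdsWithin.mono fun t ht => by rw [ht.1.2, hwq]
  have hsq : (fun t => (t - t₀) ^ 2) =o[l] (· - t₀) :=
    ((isLittleO_pow_sub_sub t₀ one_lt_two).mono (hl.trans nhdsWithin_le_nhds)).congr_left
      fun t => by rw [Real.norm_eq_abs, sq_abs]
  have hu_small : (fun t => u t - u t₀) =o[l] (· - t₀) :=
    calc (fun t => u t - u t₀) =O[l] fun t => (w t - w t₀) ^ 2 :=
          IsBigO.of_bound 1 (.of_forall fun t => by simpa [Real.norm_eq_abs, abs_sq] using huw t)
      _ =ᶠ[l] fun t => (q t - q t₀) ^ 2 := hw_eq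
      _ =O[l] fun t => (t - t₀) ^ 2 := (hq.isBigO_sub.mono hl).pow 2
      _ =o[l] (· - t₀) := hsq
  have hlin : (fun t => v * (t - t₀)) =o[l] (· - t₀) :=
    (hu_small.sub ((hasDerivWithinAt_iff_isLittleO.1 hu).mono hl)).congr_left fun t => by
      simp only [smul_eq_mul]; ring
  refine isLittleO_irrefl ?_ ((isLittleO_const_mul_left_iff hv).1 hlin)
  exact (eventually_mem_nhdsWithin.mono fun t ht => sub_ne_zero.2 ht.2).frequently

namespace FlatCantor

noncomputable def f : ℝ → ℝ := infDistPrimitive cantorSet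

theorem strictMono_f : StrictMono f :=
  strictMono_infDistPrimitive isClosed_cantorSet ⟨0, zero_mem_cantorSet⟩ interior_cantorSet

theorem continuous_f : Continuous f := continuous_infDistPrimitive cantorSet

noncomputable def fIso : ℝ ≃o ℝ :=
  strictMono_f.orderIsoOfSurjective f
    (surjective_infDistPrimitive isCompact_cantorSet.isBounded ⟨0, zero_mem_cantorSet⟩)

noncomputable def φ : ℝ → ℝ := fIso.symm

noncomputable def ψ (x : ℝ) : ℝ := ∫ s in (0 : ℝ)..x, φ s

noncomputable def K : Set ℝ := f '' cantorSet

noncomputable def P : Set (ℝ × ℝ) := (fun x => (x, ψ x)) '' K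

theorem f_φ (y : ℝ) : f (φ y) = y := fIso.apply_symm_apply y

theorem φ_f (x : ℝ) : φ (f x) = x := fIso.symm_apply_apply x

theorem continuous_φ : Continuous φ := fIso.symm.continuous

theorem hasDerivAt_ψ (x : ℝ) : HasDerivAt ψ (φ x) x :=
  (continuous_φ.integral_hasStrictDerivAt 0 x).hasDerivAt

theorem deriv_ψ : deriv ψ = φ := funext fun x => (hasDerivAt_ψ x).deriv

theorem contDiff_ψ : ContDiff ℝ 1 ψ :=
  contDiff_one_iff_deriv.2 ⟨fun x => (hasDerivAt_ψ x).differentiableAt, deriv_ψ ▸ continuous_φ⟩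

theorem convexOn_ψ : ConvexOn ℝ univ ψ :=
  Monotone.convexOn_univ_of_deriv (fun x => (hasDerivAt_ψ x).differentiableAt)
    (deriv_ψ ▸ fIso.symm.monotone)

theorem mem_P {p : ℝ × ℝ} : p ∈ P ↔ p.1 ∈ K ∧ p.2 = ψ p.1 :=
  ⟨by rintro ⟨x, hx, rfl⟩; exact ⟨hx, rfl⟩, fun h => ⟨p.1, h.1, Prod.ext rfl h.2.symm⟩⟩

theorem perfect_P : Perfect P := by
  have hgraph : Continuous fun x => (x, ψ x) := continuous_id.prodMk contDiff_ψ.continuous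
  have hinj : Injective fun x => (x, ψ x) := fun x y h => congrArg Prod.fst h
  exact ⟨((isCompact_cantorSet.image continuous_f).image hgraph).isClosed,
    (preperfect_cantorSet.image continuous_f strictMono_f.injective).image hgraph hinj⟩

theorem nonempty_P : P.Nonempty := ⟨_, ⟨f 0, ⟨0, zero_mem_cantorSet, rfl⟩, rfl⟩⟩

theorem abs_sub_le_sq_φ_sub {x : ℝ} (hx : x ∈ K) (y : ℝ) : |y - x| ≤ (φ y - φ x) ^ 2 := by
  obtain ⟨c, hc, rfl⟩ := hx
  have : |f (φ y) - f c| ≤ (φ y - c) ^ 2 := abs_infDistPrimitive_sub_le_sq hc (φ y)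
  rw [φ_f]
  rwa [f_φ] at this

theorem not_accPt_setOf_mem_P {a b : ℝ} {g : ℝ → ℝ × ℝ} (hab : a < b)
    (hg : ContDiffOn ℝ 2 g (Icc a b)) (hne : ∀ t ∈ Icc a b, derivWithin g (Icc a b) t ≠ 0)
    {t₀ : ℝ} (ht₀ : t₀ ∈ Icc a b) : ¬ AccPt t₀ (𝓟 {t ∈ Icc a b | g t ∈ P}) := by
  intro hacc
  set I := Icc a b
  set V := derivWithin g I
  have hgt₀ : g t₀ ∈ P := by
    have := ((hg.continuousOn t₀ ht₀).mono (sep_subset _ _)).mem_closure_image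
      (mem_closure_iff_clusterPt.2 hacc.clusterPt)
    exact perfect_P.closed.closure_subset (closure_mono (by rintro _ ⟨t, ht, rfl⟩; exact ht.2) this)
  have hV : ∀ t ∈ I, HasDerivWithinAt g (V t) I t := fun t ht =>
    (hg.differentiableOn two_ne_zero t ht).hasDerivWithinAt
  have hVd : DifferentiableOn ℝ V I :=
    (hg.derivWithin (uniqueDiffOn_Icc hab) (m := 1) (by norm_num)).differentiableOn one_ne_zero
  set E := fun t => (V t).2 - φ (g t).1 * (V t).1
  have hH : ∀ t ∈ I, HasDerivWithinAt (fun t => (g t).2 - ψ (g t).1) (E t) I t := fun t ht =>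
    (hV t ht).snd.sub ((hasDerivAt_ψ _).comp_hasDerivWithinAt t (hV t ht).fst)
  have hEacc : AccPt t₀ (𝓟 {t ∈ I | E t = 0}) :=
    ordConnected_Icc.accPt_setOf_hasDerivWithinAt_eq_zero hH ht₀
      (sub_eq_zero.2 (mem_P.1 hgt₀).2) <| hacc.mono <| principal_mono.2 fun t ht =>
        ⟨ht.1, sub_eq_zero.2 (mem_P.1 ht.2).2⟩
  have hEt₀ : E t₀ = 0 := by
    have hEc : ContinuousOn E I := hVd.continuousOn.snd.sub
      ((continuous_φ.comp_continuousOn hg.continuousOn.fst).mul hVd.continuousOn.fst)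
    exact ((hEc.preimage_isClosed_of_isClosed isClosed_Icc isClosed_singleton).closure_subset
      (mem_closure_iff_clusterPt.2 hEacc.clusterPt)).2
  have hslope : ∀ t ∈ I, E t = 0 → (V t).1 ≠ 0 ∧ φ (g t).1 = (V t).2 / (V t).1 := by
    intro t ht hEt
    have h₁ : (V t).1 ≠ 0 := fun h₁ => hne t ht (Prod.ext h₁ (by simpa [E, h₁] using hEt))
    exact ⟨h₁, (eq_div_iff h₁).2 (sub_eq_zero.1 hEt).symm⟩
  refine not_accPt_setOf_eq_of_abs_sub_le_sq (hV t₀ ht₀).fst (hslope t₀ ht₀ hEt₀).1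
    ((hVd t₀ ht₀).snd.div (hVd t₀ ht₀).fst (hslope t₀ ht₀ hEt₀).1)
    (fun t => abs_sub_le_sq_φ_sub (mem_P.1 hgt₀).1 _) (hslope t₀ ht₀ hEt₀).2
    (hEacc.mono (principal_mono.2 fun t ht => ⟨ht.1, (hslope t ht.1 ht.2).2⟩))

theorem finite_P_inter_image {a b : ℝ} {g : ℝ → ℝ × ℝ} (hg : ContDiffOn ℝ 2 g (Icc a b))
    (hne : ∀ t ∈ Icc a b, derivWithin g (Icc a b) t ≠ 0) : (P ∩ g '' Icc a b).Finite := by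
  rcases lt_or_ge a b with hab | hba
  · by_contra hinf
    have hT : {t ∈ Icc a b | g t ∈ P}.Infinite := fun hfin => hinf <| (hfin.image g).subset <| by
      rintro _ ⟨hp, t, ht, rfl⟩
      exact ⟨t, ⟨ht, hp⟩, rfl⟩
    obtain ⟨t₀, ht₀, hacc⟩ := hT.exists_accPt_of_subset_isCompact isCompact_Icc (sep_subset _ _)
    exact not_accPt_setOf_mem_P hab hg hne ht₀ hacc
  · exact ((subsingleton_Icc_of_ge hba).image g).finite.subset inter_subset_right

end FlatCantor

theorem stmt_16 :
    ∃ ψ : ℝ → ℝ, ContDiff ℝ 1 ψ ∧ ConvexOn ℝ Set.univ ψ ∧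
      ∃ P : Set (ℝ × ℝ), Perfect P ∧ P.Nonempty ∧
        P ⊆ {p : ℝ × ℝ | p.2 = ψ p.1} ∧
        ∀ (a b : ℝ) (g : ℝ → ℝ × ℝ), a ≤ b →
          ContDiffOn ℝ 2 g (Set.Icc a b) →
          Set.InjOn g (Set.Icc a b) →
          (∀ t ∈ Set.Icc a b, derivWithin g (Set.Icc a b) t ≠ 0) →
          (P ∩ g '' Set.Icc a b).Finite :=
  ⟨FlatCantor.ψ, FlatCantor.contDiff_ψ, FlatCantor.convexOn_ψ, FlatCantor.P, FlatCantor.perfect_P,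
    FlatCantor.nonempty_P, fun _ hp => (FlatCantor.mem_P.1 hp).2,
    fun _ _ _ _ hg _ hne => FlatCantor.finite_P_inter_image hg hne⟩
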